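/- Let N(θ) be a symmetric positive definite n×n matrix depending smoothly on θ with row blocks N₁(θ), N₂(θ), and A(θ) = (A₀(θ); I_{n₂}) the unique matrix with N₁(θ)A(θ) = 0; set Ñ(θ) = A(θ)ᵀN(θ)A(θ). Then for every x ∈ ℝ^{n₂} and y(θ) := A(θ)x: y(θ)ᵀ (dN/dθ)(θ) y(θ) = xᵀ (dÑ/dθ)(θ) x. In particular, the quadratic form of the derivative of N along the constrained solution equals the quadratic form of the derivative of the reduced matrix, even though y depends on θ. -/

import Mathlib

open Matrix

/-- The matrix `(A₀; I)` obtained by stacking `A₀` on top of the identity. -/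
def stackId {n₁ n₂ : ℕ} (A₀ : Matrix (Fin n₁) (Fin n₂) ℝ) :
    Matrix (Fin n₁ ⊕ Fin n₂) (Fin n₂) ℝ :=
  Matrix.of (Sum.elim A₀ (1 : Matrix (Fin n₂) (Fin n₂) ℝ))

/-- The entrywise derivative of a matrix-valued function. -/
noncomputable def matDeriv {m n : Type*} (M : ℝ → Matrix m n ℝ) (θ : ℝ) :
    Matrix m n ℝ :=
  Matrix.of fun i j => deriv (fun t => M t i j) θ

lemma dot_expand {m : Type*} [Fintype m] (M : Matrix m m ℝ) (v : m → ℝ) :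
    v ⬝ᵥ (M *ᵥ v) = ∑ i, ∑ j, v i * (M i j * v j) := by
  simp only [dotProduct, Matrix.mulVec, Finset.mul_sum]

theorem quadratic_form_derivative_reduction {n₁ n₂ : ℕ}
    (N : ℝ → Matrix (Fin n₁ ⊕ Fin n₂) (Fin n₁ ⊕ Fin n₂) ℝ)
    (hsmooth : ∀ i j, ContDiff ℝ (⊤ : ℕ∞) (fun θ => N θ i j))
    (hN : ∀ θ, (N θ).PosDef)
    (A₀ : ℝ → Matrix (Fin n₁) (Fin n₂) ℝ)
    (hA₀smooth : ∀ i j, ContDiff ℝ (⊤ : ℕ∞) (fun θ => A₀ θ i j))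
    (hA : ∀ θ, ((N θ).submatrix Sum.inl id) * stackId (A₀ θ) = 0)
    (Ntil : ℝ → Matrix (Fin n₂) (Fin n₂) ℝ)
    (hNtil : ∀ θ, Ntil θ = (stackId (A₀ θ))ᵀ * N θ * stackId (A₀ θ))
    (x : Fin n₂ → ℝ) (θ : ℝ) :
    (stackId (A₀ θ) *ᵥ x) ⬝ᵥ (matDeriv N θ *ᵥ (stackId (A₀ θ) *ᵥ x)) =
      x ⬝ᵥ (matDeriv Ntil θ *ᵥ x) := by
  classical
  set A : ℝ → Matrix (Fin n₁ ⊕ Fin n₂) (Fin n₂) ℝ := fun t => stackId (A₀ t) with hAdef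
  -- smoothness of entries of A
  have hAentry : ∀ k j, ContDiff ℝ (⊤ : ℕ∞) (fun t => A t k j) := by
    intro k j
    cases k with
    | inl i => exact hA₀smooth i j
    | inr i =>
      have : (fun t => A t (Sum.inr i) j) = fun _ => (1 : Matrix (Fin n₂) (Fin n₂) ℝ) i j := by
        funext t; rfl
      rw [this]; exact contDiff_const
  set y : ℝ → (Fin n₁ ⊕ Fin n₂) → ℝ := fun t => A t *ᵥ x with hydef
  set y' : (Fin n₁ ⊕ Fin n₂) → ℝ := fun i => ∑ j, deriv (fun t => A t i j) θ * x j with hy'def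
  have hy : ∀ i, HasDerivAt (fun t => y t i) (y' i) θ := by
    intro i
    have : (fun t => y t i) = fun t => ∑ j, A t i j * x j := by
      funext t; simp [y, mulVec, dotProduct]
    rw [this]
    exact HasDerivAt.fun_sum fun j _ =>
      (((hAentry i j).differentiable (by simp) θ).hasDerivAt).mul_const (x j)
  have hy'bot : ∀ b : Fin n₂, y' (Sum.inr b) = 0 := by
    intro b
    have h0 : ∀ j, (fun t => A t (Sum.inr b) j) = fun _ => (1 : Matrix (Fin n₂) (Fin n₂) ℝ) b j := by
      intro j; funext t; rfl
    simp only [y', h0, deriv_const]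
    simp
  -- top rows of N *ᵥ y vanish
  have hNyTop : ∀ t (a : Fin n₁), (∑ k, N t (Sum.inl a) k * y t k) = 0 := by
    intro t a
    have h2 := congrFun (congrArg (fun M => M *ᵥ x) (hA t)) a
    simp only [Matrix.mulVec, Matrix.mul_apply, dotProduct, Matrix.submatrix_apply, id_eq,
      Matrix.zero_mulVec, Pi.zero_apply, Matrix.zero_apply, zero_mul, Finset.sum_const_zero,
      Finset.sum_mul, mul_assoc] at h2
    have e1 : ∀ k, y t k = ∑ j, stackId (A₀ t) k j * x j := fun k => rfl
    simp only [e1, Finset.mul_sum]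
    rw [Finset.sum_comm]
    simpa only [mul_assoc] using h2
  -- symmetry of N
  have hsymm : ∀ t i j, N t i j = N t j i := by
    intro t i j
    have h := (hN t).1
    rw [Matrix.IsHermitian] at h
    have h2 := congrFun (congrFun h j) i
    simpa [Matrix.conjTranspose_apply] using h2
  -- cross term vanishes
  have hcross : ∀ t, (∑ i, ∑ j, y' i * (N t i j * y t j)) = 0 := by
    intro t
    refine Finset.sum_eq_zero fun i _ => ?_
    rw [← Finset.mul_sum]
    cases i with
    | inl a => rw [hNyTop t a, mul_zero]
    | inr b => rw [hy'bot b, zero_mul]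
  -- entry formula for Ntil
  have hNtilEntry : ∀ t i j, Ntil t i j = ∑ k, ∑ l, A t k i * (N t k l * A t l j) := by
    intro t i j
    have h1 : Ntil t i j = ∑ l, ∑ k, stackId (A₀ t) k i * (N t k l * stackId (A₀ t) l j) := by
      rw [hNtil t]
      simp only [Matrix.mul_apply, Matrix.transpose_apply, Finset.sum_mul, mul_assoc]
    rw [h1]; exact Finset.sum_comm
  -- smoothness of Ntil entries
  have hNtilC : ∀ i j, ContDiff ℝ (⊤ : ℕ∞) (fun t => Ntil t i j) := by
    intro i j
    have : (fun t => Ntil t i j) = fun t => ∑ k, ∑ l, A t k i * (N t k l * A t l j) := by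
      funext t; exact hNtilEntry t i j
    rw [this]
    exact ContDiff.sum fun k _ => ContDiff.sum fun l _ =>
      (hAentry k i).mul ((hsmooth k l).mul (hAentry l j))
  -- the common function g
  set g : ℝ → ℝ := fun t => ∑ i, ∑ j, y t i * (N t i j * y t j) with hgdef
  -- derivative of g from LHS representation
  have hg1 : HasDerivAt g
      (∑ i, ∑ j, (y' i * (N θ i j * y θ j) +
        y θ i * (deriv (fun t => N t i j) θ * y θ j + N θ i j * y' j))) θ := by
    refine HasDerivAt.fun_sum fun i _ => HasDerivAt.fun_sum fun j _ => ?_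
    exact (hy i).mul
      ((((hsmooth i j).differentiable (by simp) θ).hasDerivAt).mul (hy j))
  -- g equals the reduced quadratic form
  have hgeq : g = fun t => ∑ i, ∑ j, x i * (Ntil t i j * x j) := by
    funext t
    rw [← dot_expand (Ntil t) x, hNtil t]
    rw [← Matrix.mulVec_mulVec, ← Matrix.mulVec_mulVec, Matrix.dotProduct_mulVec,
      Matrix.vecMul_transpose, dot_expand]
  have hg2 : HasDerivAt g (∑ i, ∑ j, x i * (deriv (fun t => Ntil t i j) θ * x j)) θ := by
    rw [hgeq]
    refine HasDerivAt.fun_sum fun i _ => HasDerivAt.fun_sum fun j _ => ?_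
    exact (HasDerivAt.const_mul (x i)
      (((((hNtilC i j).differentiable (by simp)) θ).hasDerivAt).mul_const (x j)))
  -- simplify the LHS derivative: cross terms vanish
  have hcross2 : (∑ i, ∑ j, y θ i * (N θ i j * y' j)) = 0 := by
    have hswap : (∑ i, ∑ j, y θ i * (N θ i j * y' j))
        = ∑ j, ∑ i, y' j * (N θ j i * y θ i) := by
      rw [Finset.sum_comm]
      congr 1; funext j; congr 1; funext i
      rw [hsymm θ i j]; ring
    rw [hswap]; exact hcross θ
  have hD1 : (∑ i, ∑ j, (y' i * (N θ i j * y θ j) +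
        y θ i * (deriv (fun t => N t i j) θ * y θ j + N θ i j * y' j)))
      = ∑ i, ∑ j, y θ i * (deriv (fun t => N t i j) θ * y θ j) := by
    have expand : ∀ i j, y' i * (N θ i j * y θ j) +
        y θ i * (deriv (fun t => N t i j) θ * y θ j + N θ i j * y' j)
        = y' i * (N θ i j * y θ j) + y θ i * (deriv (fun t => N t i j) θ * y θ j)
          + y θ i * (N θ i j * y' j) := by intro i j; ring
    simp only [expand, Finset.sum_add_distrib]
    rw [hcross θ, hcross2]
    ring
  have hg1' := hg1
  rw [hD1] at hg1'
  have hmain := hg1'.unique hg2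
  -- conclude
  have hL : (stackId (A₀ θ) *ᵥ x) ⬝ᵥ (matDeriv N θ *ᵥ (stackId (A₀ θ) *ᵥ x))
      = ∑ i, ∑ j, y θ i * (deriv (fun t => N t i j) θ * y θ j) := by
    rw [dot_expand]; rfl
  have hR : x ⬝ᵥ (matDeriv Ntil θ *ᵥ x)
      = ∑ i, ∑ j, x i * (deriv (fun t => Ntil t i j) θ * x j) := by
    rw [dot_expand]; rfl
  rw [hL, hR, hmain]
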